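/- arXiv:1805.09737 — 6 statements merged into one kernel-verified Lean document; each statement's English description precedes it below -/
import Mathlib

section
/- Let A, B be n×n real symmetric matrices with rank(B) ≤ 2. Then for every skew-symmetric matrix W ∈ Kⁿ with ‖W‖_F = 1 there exists a symmetric matrix U ∈ Sⁿ with ‖U‖_F = 1 such that trace(A·U·B·U) = trace(A·W·B·Wᵀ). -/
open Matrix

noncomputable def frobNorm {n : ℕ} (M : Matrix (Fin n) (Fin n) ℝ) : ℝ :=
  Real.sqrt (Mᵀ * M).trace

/-!
Diagonalise `B = V diag(μ) Vᵀ` with `V` orthogonal. Conjugation by `V` preserves symmetry,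
skew-symmetry, the Frobenius norm and both traces, so we may take `B = diag(μ)` with at most two
nonzero `μ c`. Then `trace (A U B Uᵀ) = ∑ c, μ c * (U e_c)ᵀ A (U e_c)` only sees the columns of `U`
at these indices, and it suffices that they agree with the columns of `W` up to sign. Such a
symmetric `U` is obtained from `W` by flipping signs of entries: `U k l = sign (r l - r k) * W k l`
for an injective ranking `r` that puts one index with `μ c ≠ 0` on top and the other at the bottom.
Flipping signs keeps every `|U k l| = |W k l|`, hence the Frobenius norm.
-/

open Function

section SignTwist

variable {ι : Type*}

def signTwist (r : ι → ℤ) (W : Matrix ι ι ℝ) : Matrix ι ι ℝ :=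
  of fun k l ↦ ((r l - r k).sign : ℝ) * W k l

lemma diag_eq_zero_of_transpose_eq_neg {W : Matrix ι ι ℝ} (hW : Wᵀ = -W) (k : ι) : W k k = 0 := by
  have := congr_fun₂ hW k k
  simp only [transpose_apply, Matrix.neg_apply] at this
  linarith

lemma signTwist_transpose (r : ι → ℤ) {W : Matrix ι ι ℝ} (hW : Wᵀ = -W) :
    (signTwist r W)ᵀ = signTwist r W := by
  ext k l
  have hWkl : W l k = -W k l := by simpa using congr_fun₂ hW k l
  simp only [signTwist, transpose_apply, of_apply, hWkl, ← neg_sub (r l), Int.sign_neg]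
  push_cast
  ring

lemma trace_transpose_mul_self_signTwist [Fintype ι] {r : ι → ℤ} (hr : Injective r)
    {W : Matrix ι ι ℝ} (hW : ∀ k, W k k = 0) :
    ((signTwist r W)ᵀ * signTwist r W).trace = (Wᵀ * W).trace := by
  simp only [trace, diag, mul_apply, transpose_apply, signTwist, of_apply]
  refine Finset.sum_congr rfl fun l _ ↦ Finset.sum_congr rfl fun k _ ↦ ?_
  rcases eq_or_ne k l with rfl | hkl
  · simp [hW]
  · have hsign : ((r l - r k).sign : ℝ) ^ 2 = 1 := by
      rcases (sub_ne_zero.mpr (hr.ne hkl.symm)).lt_or_gt with h | h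
      · simp [Int.sign_eq_neg_one_of_neg h]
      · simp [Int.sign_eq_one_of_pos h]
    linear_combination (W k l * W k l) * hsign

variable {r : ι → ℤ} {W : Matrix ι ι ℝ} {c : ι}

lemma signTwist_apply_of_forall_le (hr : Injective r) (hWc : W c c = 0) (hc : ∀ k, r k ≤ r c)
    (a : ι) : signTwist r W a c = W a c := by
  rcases eq_or_ne a c with rfl | hac
  · simp [signTwist, hWc]
  · have : 0 < r c - r a := sub_pos.mpr ((hc a).lt_of_ne (hr.ne hac))
    simp [signTwist, Int.sign_eq_one_of_pos this]

lemma signTwist_apply_of_forall_ge (hr : Injective r) (hWc : W c c = 0) (hc : ∀ k, r c ≤ r k)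
    (a : ι) : signTwist r W a c = -W a c := by
  rcases eq_or_ne a c with rfl | hac
  · simp [signTwist, hWc]
  · have : r c - r a < 0 := sub_neg.mpr ((hc a).lt_of_ne (hr.ne hac.symm))
    simp [signTwist, Int.sign_eq_neg_one_of_neg this]

lemma signTwist_mul_signTwist_of_extremal (hr : Injective r) (hWc : W c c = 0)
    (hc : (∀ k, r k ≤ r c) ∨ ∀ k, r c ≤ r k) (a b : ι) :
    signTwist r W a c * signTwist r W b c = W a c * W b c := by
  rcases hc with hc | hc
  · rw [signTwist_apply_of_forall_le hr hWc hc, signTwist_apply_of_forall_le hr hWc hc]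
  · rw [signTwist_apply_of_forall_ge hr hWc hc, signTwist_apply_of_forall_ge hr hWc hc, neg_mul_neg]

end SignTwist

lemma trace_mul_diagonal_mul_transpose_congr {ι R : Type*} [Fintype ι] [DecidableEq ι]
    [CommSemiring R] {A U W : Matrix ι ι R} {μ : ι → R}
    (h : ∀ c, μ c ≠ 0 → ∀ a b, U a c * U b c = W a c * W b c) :
    (A * U * diagonal μ * Uᵀ).trace = (A * W * diagonal μ * Wᵀ).trace := by
  simp only [trace, diag, mul_apply (M := _ * diagonal μ), mul_diagonal, mul_apply (M := A),
    transpose_apply]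
  refine Finset.sum_congr rfl fun a _ ↦ Finset.sum_congr rfl fun c _ ↦ ?_
  by_cases hc : μ c = 0
  · simp [hc]
  · simp only [Finset.sum_mul]
    refine Finset.sum_congr rfl fun b _ ↦ ?_
    calc A a b * U b c * μ c * U a c = A a b * μ c * (U b c * U a c) := by ring
      _ = A a b * W b c * μ c * W a c := by rw [h c hc]; ring

section OrthogonalConj

variable {ι R : Type*} [Fintype ι] [CommSemiring R] {V : Matrix ι ι R}

lemma transpose_conj (V X : Matrix ι ι R) : (V * X * Vᵀ)ᵀ = V * Xᵀ * Vᵀ := by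
  simp only [transpose_mul, transpose_transpose, Matrix.mul_assoc]

lemma conj_conj_transpose [DecidableEq ι] (hV : V * Vᵀ = 1) (X : Matrix ι ι R) :
    V * (Vᵀ * X * V) * Vᵀ = X := by
  simp only [← Matrix.mul_assoc, hV, Matrix.one_mul]
  rw [Matrix.mul_assoc, hV, Matrix.mul_one]

lemma trace_mul_conj (A X : Matrix ι ι R) :
    (A * (V * X * Vᵀ)).trace = (Vᵀ * A * V * X).trace := by
  rw [← Matrix.mul_assoc, trace_mul_comm, ← Matrix.mul_assoc]
  simp only [Matrix.mul_assoc]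

lemma conj_mul_conj [DecidableEq ι] (hV : Vᵀ * V = 1) (X Y : Matrix ι ι R) :
    V * X * Vᵀ * (V * Y * Vᵀ) = V * (X * Y) * Vᵀ := by
  simp only [Matrix.mul_assoc]
  rw [← Matrix.mul_assoc Vᵀ V, hV, Matrix.one_mul]

lemma trace_transpose_mul_self_conj [DecidableEq ι] (hV : Vᵀ * V = 1) (X : Matrix ι ι R) :
    ((V * X * Vᵀ)ᵀ * (V * X * Vᵀ)).trace = (Xᵀ * X).trace := by
  rw [transpose_conj, conj_mul_conj hV, ← Matrix.one_mul (V * _ * Vᵀ), trace_mul_conj]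
  simp [hV]

lemma trace_mul_conj_mul_conj_mul_conj [DecidableEq ι] (hV : Vᵀ * V = 1)
    (A X D Y : Matrix ι ι R) :
    (A * (V * X * Vᵀ) * (V * D * Vᵀ) * (V * Y * Vᵀ)).trace = (Vᵀ * A * V * X * D * Y).trace := by
  rw [Matrix.mul_assoc A, conj_mul_conj hV, Matrix.mul_assoc A, conj_mul_conj hV, trace_mul_conj]
  simp only [Matrix.mul_assoc]

end OrthogonalConj

lemma Matrix.exists_orthogonal_diagonalization {ι : Type*} [Fintype ι] [DecidableEq ι]
    {B : Matrix ι ι ℝ} (hB : Bᵀ = B) :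
    ∃ V : Matrix ι ι ℝ, ∃ μ : ι → ℝ, Vᵀ * V = 1 ∧ V * Vᵀ = 1 ∧ B = V * diagonal μ * Vᵀ ∧
      B.rank = (Finset.univ.filter fun c ↦ μ c ≠ 0).card := by
  have hH : B.IsHermitian := (conjTranspose_eq_transpose_of_trivial B).trans hB
  set V : Matrix ι ι ℝ := ↑hH.eigenvectorUnitary
  have hstar : star V = Vᵀ := conjTranspose_eq_transpose_of_trivial V
  refine ⟨V, hH.eigenvalues, ?_, ?_, ?_, ?_⟩
  · rw [← hstar]; exact mem_unitaryGroup_iff'.mp hH.eigenvectorUnitary.2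
  · rw [← hstar]; exact mem_unitaryGroup_iff.mp hH.eigenvectorUnitary.2
  · conv_lhs => rw [hH.spectral_theorem]
    simp only [Unitary.conjStarAlgAut_apply, RCLike.ofReal_real_eq_id, Function.id_comp]
    rw [← hstar]
  · rw [hH.rank_eq_card_non_zero_eigs, Fintype.card_subtype]

namespace Fin

variable {n : ℕ} (i j : Fin n)

def rankMaxMin (k : Fin n) : ℤ :=
  if k = i then n else if k = j then -1 else k

lemma rankMaxMin_injective : Injective (rankMaxMin i j) := by
  intro a b h
  have ha := a.isLt
  have hb := b.isLt
  simp only [rankMaxMin] at h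
  split_ifs at h <;> first | (subst_vars; rfl) | (ext; omega)

lemma rankMaxMin_le_rankMaxMin_left (k : Fin n) : rankMaxMin i j k ≤ rankMaxMin i j i := by
  have := k.isLt
  simp only [rankMaxMin]
  split_ifs <;> omega

lemma rankMaxMin_right_le_rankMaxMin (hij : i ≠ j) (k : Fin n) :
    rankMaxMin i j j ≤ rankMaxMin i j k := by
  simp only [rankMaxMin, if_neg hij.symm, if_true]
  split_ifs <;> omega

lemma exists_injective_extremal_of_card_le_two {s : Finset (Fin n)} (hs : s.card ≤ 2) :
    ∃ r : Fin n → ℤ, Injective r ∧ ∀ c ∈ s, (∀ k, r k ≤ r c) ∨ ∀ k, r c ≤ r k := by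
  interval_cases h : s.card
  · exact ⟨fun k ↦ k, Nat.cast_injective.comp Fin.val_injective, by simp_all⟩
  · obtain ⟨i, rfl⟩ := Finset.card_eq_one.mp h
    refine ⟨rankMaxMin i i, rankMaxMin_injective i i, ?_⟩
    simpa using Or.inl (rankMaxMin_le_rankMaxMin_left i i)
  · obtain ⟨i, j, hij, rfl⟩ := Finset.card_eq_two.mp h
    refine ⟨rankMaxMin i j, rankMaxMin_injective i j, ?_⟩
    simp only [Finset.mem_insert, Finset.mem_singleton, forall_eq_or_imp, forall_eq]
    exact ⟨Or.inl (rankMaxMin_le_rankMaxMin_left i j),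
      Or.inr (rankMaxMin_right_le_rankMaxMin i j hij)⟩

end Fin

theorem stmt_4_general (n : ℕ) (A B : Matrix (Fin n) (Fin n) ℝ)
    (hB : Bᵀ = B) (hrB : B.rank ≤ 2)
    (W : Matrix (Fin n) (Fin n) ℝ) (hW : Wᵀ = -W) (hWn : frobNorm W = 1) :
    ∃ U : Matrix (Fin n) (Fin n) ℝ, Uᵀ = U ∧ frobNorm U = 1 ∧
      (A * U * B * U).trace = (A * W * B * Wᵀ).trace := by
  obtain ⟨V, μ, hVV, hVV', rfl, hrank⟩ := exists_orthogonal_diagonalization hB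
  obtain ⟨r, hr, hext⟩ := Fin.exists_injective_extremal_of_card_le_two (hrank ▸ hrB)
  set W' := Vᵀ * W * V
  have hW' : W'ᵀ = -W' := by simp [W', transpose_mul, hW, Matrix.mul_assoc]
  have hW'diag := diag_eq_zero_of_transpose_eq_neg hW'
  have hU' := signTwist_transpose r hW'
  have hWconj : V * W' * Vᵀ = W := conj_conj_transpose hVV' W
  refine ⟨V * signTwist r W' * Vᵀ, by rw [transpose_conj, hU'], ?_, ?_⟩
  · rw [← hWn, ← hWconj, frobNorm, frobNorm, trace_transpose_mul_self_conj hVV,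
      trace_transpose_mul_self_conj hVV, trace_transpose_mul_self_signTwist hr hW'diag]
  · rw [← hWconj, transpose_conj, trace_mul_conj_mul_conj_mul_conj hVV,
      trace_mul_conj_mul_conj_mul_conj hVV]
    nth_rw 2 [← hU']
    exact trace_mul_diagonal_mul_transpose_congr fun c hc ↦
      signTwist_mul_signTwist_of_extremal hr (hW'diag c) (hext c (by simpa using hc))

theorem stmt_4 (n : ℕ) (A B : Matrix (Fin n) (Fin n) ℝ)
    (hA : Aᵀ = A) (hB : Bᵀ = B) (hrB : B.rank ≤ 2)
    (W : Matrix (Fin n) (Fin n) ℝ) (hW : Wᵀ = -W) (hWn : frobNorm W = 1) :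
    ∃ U : Matrix (Fin n) (Fin n) ℝ, Uᵀ = U ∧ frobNorm U = 1 ∧
      (A * U * B * U).trace = (A * W * B * Wᵀ).trace :=
  stmt_4_general n A B hB hrB W hW hWn
end

section
/- Let n ≥ 2 and let A, B be n×n real skew-symmetric matrices with min{rank(A), rank(B)} ≤ 2. Then inf E(A,B) ≤ inf O(A,B) and sup E(A,B) ≥ sup O(A,B). -/
/-!
By symmetry of both sets in `A` and `B` we may assume `rank B ≤ 2`, so `B = γ J` where
`J = u vᵀ - v uᵀ` is the quarter turn of the plane of an orthonormal pair `u, v`; let `P` be the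
orthogonal projection onto that plane. Every skew `W` has `P W P = c J`, and then the symmetric
matrix `U = W J + (W J)ᵀ + c P` satisfies `U P = W J`. Hence `U J U = W J Wᵀ`, so `U` and `W` give
the same value of `trace (A · B ·)`, while `‖U‖² = ‖W P‖² + ‖(1 - P) W P‖² ≤ ‖W‖²` because `W` is
skew. Rescaling `U` to the unit sphere exhibits each value of `O(A, B)` as a convex combination of
`0` and a value of `E(A, B)`, and `0 ∈ E(A, B)`.
-/

open Matrix

def Eset {n : ℕ} (A B : Matrix (Fin n) (Fin n) ℝ) : Set ℝ :=
  {t | ∃ U : Matrix (Fin n) (Fin n) ℝ, Uᵀ = U ∧ frobNorm U = 1 ∧ t = (A * U * B * U).trace}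

def Oset {n : ℕ} (A B : Matrix (Fin n) (Fin n) ℝ) : Set ℝ :=
  {t | ∃ W : Matrix (Fin n) (Fin n) ℝ, Wᵀ = -W ∧ frobNorm W = 1 ∧ t = (A * W * B * Wᵀ).trace}

variable {ι : Type*}

def planeProj (u v : ι → ℝ) : Matrix ι ι ℝ := vecMulVec u u + vecMulVec v v

/-- For an orthonormal pair this is the quarter turn `v ↦ u`, `u ↦ -v` of their plane, extended
by zero on its orthogonal complement. -/
def planeRot (u v : ι → ℝ) : Matrix ι ι ℝ := vecMulVec u v - vecMulVec v u

lemma transpose_planeProj (u v : ι → ℝ) : (planeProj u v)ᵀ = planeProj u v := by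
  simp [planeProj, transpose_vecMulVec]

lemma transpose_planeRot (u v : ι → ℝ) : (planeRot u v)ᵀ = -planeRot u v := by
  simp [planeRot, transpose_vecMulVec]

variable [Fintype ι]

section FrobeniusSq

def frobSq (X : Matrix ι ι ℝ) : ℝ := (Xᵀ * X).trace

lemma frobSq_eq_sum (X : Matrix ι ι ℝ) : frobSq X = ∑ i, ∑ j, X i j ^ 2 := by
  simp only [frobSq, trace, diag, mul_apply, transpose_apply, sq]
  exact Finset.sum_comm

lemma frobSq_nonneg (X : Matrix ι ι ℝ) : 0 ≤ frobSq X := by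
  rw [frobSq_eq_sum]; positivity

lemma frobSq_eq_zero_iff {X : Matrix ι ι ℝ} : frobSq X = 0 ↔ X = 0 := by
  simpa [frobSq, conjTranspose_eq_transpose_of_trivial] using
    trace_conjTranspose_mul_self_eq_zero_iff (A := X)

lemma frobSq_transpose (X : Matrix ι ι ℝ) : frobSq Xᵀ = frobSq X := by
  rw [frobSq, frobSq, transpose_transpose, trace_mul_comm]

lemma frobSq_neg (X : Matrix ι ι ℝ) : frobSq (-X) = frobSq X := by
  simp [frobSq]

lemma frobSq_smul (c : ℝ) (X : Matrix ι ι ℝ) : frobSq (c • X) = c ^ 2 * frobSq X := by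
  simp only [frobSq, transpose_smul, smul_mul, Matrix.mul_smul, trace_smul, smul_eq_mul]
  ring

lemma frobSq_mul_of_isProj {P : Matrix ι ι ℝ} (hPt : Pᵀ = P) (hPP : P * P = P)
    (X : Matrix ι ι ℝ) : frobSq (X * P) = (Xᵀ * X * P).trace := by
  rw [frobSq, transpose_mul, hPt, Matrix.mul_assoc, trace_mul_comm, Matrix.mul_assoc,
    Matrix.mul_assoc, hPP, ← Matrix.mul_assoc]

variable [DecidableEq ι]

lemma frobSq_eq_add_of_isProj {P : Matrix ι ι ℝ} (hPt : Pᵀ = P) (hPP : P * P = P)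
    (X : Matrix ι ι ℝ) : frobSq X = frobSq (X * P) + frobSq (X * (1 - P)) := by
  have hQt : (1 - P)ᵀ = 1 - P := by rw [transpose_sub, transpose_one, hPt]
  have hQQ : (1 - P) * (1 - P) = 1 - P := by
    rw [sub_mul, mul_sub, mul_sub, hPP]; simp
  rw [frobSq_mul_of_isProj hPt hPP, frobSq_mul_of_isProj hQt hQQ, ← trace_add, ← mul_add,
    add_sub_cancel, Matrix.mul_one, frobSq]

end FrobeniusSq

section Skew

variable {X : Matrix ι ι ℝ}

lemma dotProduct_mulVec_of_skew (hX : Xᵀ = -X) (x y : ι → ℝ) :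
    x ⬝ᵥ X *ᵥ y = -(y ⬝ᵥ X *ᵥ x) := by
  rw [dotProduct_mulVec, ← mulVec_transpose, hX, neg_mulVec, neg_dotProduct, dotProduct_comm]

lemma dotProduct_mulVec_self_of_skew (hX : Xᵀ = -X) (x : ι → ℝ) : x ⬝ᵥ X *ᵥ x = 0 := by
  linarith [dotProduct_mulVec_of_skew hX x x]

lemma planeProj_mul_mul_planeProj_of_skew (hX : Xᵀ = -X) (u v : ι → ℝ) :
    planeProj u v * X * planeProj u v = (u ⬝ᵥ X *ᵥ v) • planeRot u v := by
  have hvu : v ⬝ᵥ X *ᵥ u = -(u ⬝ᵥ X *ᵥ v) := dotProduct_mulVec_of_skew hX v u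
  simp only [planeProj, planeRot, add_mul, mul_add, vecMulVec_mul, mul_vecMulVec,
    vecMulVec_mulVec]
  ext i j
  simp only [← dotProduct_mulVec, dotProduct_mulVec_self_of_skew hX, hvu, MulOpposite.op_zero,
    MulOpposite.op_neg, op_smul_eq_smul, zero_smul, neg_smul, zero_vecMulVec, neg_vecMulVec,
    smul_vecMulVec, zero_add, add_zero, Matrix.add_apply, Matrix.neg_apply, Matrix.smul_apply,
    Matrix.sub_apply, vecMulVec_apply, smul_eq_mul]
  ring

end Skew

structure OrthonormalPair (u v : ι → ℝ) : Prop where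
  dotProduct_self_left : u ⬝ᵥ u = 1
  dotProduct_self_right : v ⬝ᵥ v = 1
  dotProduct_eq_zero : u ⬝ᵥ v = 0

namespace OrthonormalPair

variable {u v : ι → ℝ}

lemma dotProduct_eq_zero' (h : OrthonormalPair u v) : v ⬝ᵥ u = 0 := by
  rw [dotProduct_comm, h.dotProduct_eq_zero]

lemma planeProj_mul_planeProj (h : OrthonormalPair u v) :
    planeProj u v * planeProj u v = planeProj u v := by
  simp [planeProj, add_mul, mul_add, vecMulVec_mul_vecMulVec, h.dotProduct_self_left,
    h.dotProduct_self_right, h.dotProduct_eq_zero, h.dotProduct_eq_zero']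

lemma planeProj_mul_planeRot (h : OrthonormalPair u v) :
    planeProj u v * planeRot u v = planeRot u v := by
  simp [planeProj, planeRot, add_mul, mul_sub, vecMulVec_mul_vecMulVec, h.dotProduct_self_left,
    h.dotProduct_self_right, h.dotProduct_eq_zero, h.dotProduct_eq_zero']

lemma planeRot_mul_planeProj (h : OrthonormalPair u v) :
    planeRot u v * planeProj u v = planeRot u v := by
  simpa [transpose_planeProj, transpose_planeRot] using congrArg transpose h.planeProj_mul_planeRot

lemma planeRot_mul_planeRot (h : OrthonormalPair u v) :
    planeRot u v * planeRot u v = -planeProj u v := by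
  simp only [planeRot, planeProj, mul_sub, sub_mul, vecMulVec_mul_vecMulVec, h.dotProduct_self_left,
    h.dotProduct_self_right, h.dotProduct_eq_zero, h.dotProduct_eq_zero', zero_smul, one_smul,
    vecMulVec_zero, zero_sub, sub_zero]
  abel

lemma trace_planeProj (h : OrthonormalPair u v) : (planeProj u v).trace = 2 := by
  rw [planeProj, trace_add, trace_vecMulVec, trace_vecMulVec, h.dotProduct_self_left,
    h.dotProduct_self_right, one_add_one_eq_two]

lemma planeProj_mulVec_left (h : OrthonormalPair u v) : planeProj u v *ᵥ u = u := by
  simp [planeProj, add_mulVec, vecMulVec_mulVec, h.dotProduct_self_left, h.dotProduct_eq_zero']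

lemma planeProj_mulVec_right (h : OrthonormalPair u v) : planeProj u v *ᵥ v = v := by
  simp [planeProj, add_mulVec, vecMulVec_mulVec, h.dotProduct_self_right, h.dotProduct_eq_zero]

lemma planeRot_mul_transpose (h : OrthonormalPair u v) :
    planeRot u v * (planeRot u v)ᵀ = planeProj u v := by
  rw [transpose_planeRot, mul_neg, h.planeRot_mul_planeRot, neg_neg]

lemma frobSq_mul_planeRot (h : OrthonormalPair u v) (X : Matrix ι ι ℝ) :
    frobSq (X * planeRot u v) = frobSq (X * planeProj u v) := by
  rw [frobSq_mul_of_isProj (transpose_planeProj u v) h.planeProj_mul_planeProj, frobSq,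
    transpose_mul, Matrix.mul_assoc, trace_mul_comm, Matrix.mul_assoc, Matrix.mul_assoc,
    h.planeRot_mul_transpose, ← Matrix.mul_assoc]

/-- `X * J * Xᵀ` only depends on `X * P`, and `J * J * Jᵀ = J`. -/
lemma mul_planeRot_mul_transpose_eq (h : OrthonormalPair u v) {X Y : Matrix ι ι ℝ}
    (hXY : X * planeProj u v = Y * planeRot u v) :
    X * planeRot u v * Xᵀ = Y * planeRot u v * Yᵀ := by
  have hJ : planeRot u v = planeProj u v * planeRot u v * planeProj u v := by
    rw [h.planeProj_mul_planeRot, h.planeRot_mul_planeProj]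
  calc X * planeRot u v * Xᵀ
      = X * planeProj u v * planeRot u v * (X * planeProj u v)ᵀ := by
        conv_lhs => rw [hJ]
        simp only [transpose_mul, transpose_planeProj, Matrix.mul_assoc]
    _ = Y * (planeRot u v * planeRot u v * (planeRot u v)ᵀ) * Yᵀ := by
        rw [hXY, transpose_mul]; simp only [Matrix.mul_assoc]
    _ = Y * planeRot u v * Yᵀ := by
        rw [h.planeRot_mul_planeRot, transpose_planeRot, neg_mul_neg, h.planeProj_mul_planeRot]

lemma linearIndependent (h : OrthonormalPair u v) : LinearIndependent ℝ ![u, v] := by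
  rw [LinearIndependent.pair_iff]
  intro s t hst
  have hu := congrArg (u ⬝ᵥ ·) hst
  have hv := congrArg (v ⬝ᵥ ·) hst
  simp only [dotProduct_add, dotProduct_smul, h.dotProduct_self_left, h.dotProduct_self_right,
    h.dotProduct_eq_zero, h.dotProduct_eq_zero', dotProduct_zero, smul_eq_mul] at hu hv
  constructor <;> linarith

lemma finrank_span (h : OrthonormalPair u v) :
    Module.finrank ℝ (Submodule.span ℝ {u, v}) = 2 := by
  rw [← range_cons_cons_empty u v ![], finrank_span_eq_card h.linearIndependent, Fintype.card_fin]

lemma planeProj_mulVec_of_mem_span (h : OrthonormalPair u v) {z : ι → ℝ}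
    (hz : z ∈ Submodule.span ℝ {u, v}) : planeProj u v *ᵥ z = z := by
  obtain ⟨a, b, rfl⟩ := Submodule.mem_span_pair.mp hz
  rw [mulVec_add, mulVec_smul, mulVec_smul, h.planeProj_mulVec_left, h.planeProj_mulVec_right]

lemma transpose_mul_planeRot_mul_planeProj (h : OrthonormalPair u v) {W : Matrix ι ι ℝ}
    (hW : Wᵀ = -W) :
    (W * planeRot u v)ᵀ * planeProj u v = -(u ⬝ᵥ W *ᵥ v) • planeProj u v := by
  calc (W * planeRot u v)ᵀ * planeProj u v = planeRot u v * W * planeProj u v := by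
        rw [transpose_mul, hW, transpose_planeRot, neg_mul_neg]
    _ = planeRot u v * (planeProj u v * W * planeProj u v) := by
        rw [← Matrix.mul_assoc, ← Matrix.mul_assoc, h.planeRot_mul_planeProj]
    _ = -(u ⬝ᵥ W *ᵥ v) • planeProj u v := by
        rw [planeProj_mul_mul_planeProj_of_skew hW, Matrix.mul_smul, h.planeRot_mul_planeRot,
          smul_neg, neg_smul]

variable [DecidableEq ι]

lemma frobSq_planeRot (h : OrthonormalPair u v) :
    frobSq (planeRot u v) = 2 := by
  simpa [frobSq, transpose_planeProj, h.planeProj_mul_planeProj, h.trace_planeProj] using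
    h.frobSq_mul_planeRot 1

/-- The witness is `U = W J + (W J)ᵀ + c P` where `P W P = c J`; in the norm bound,
`‖(1 - P) W P‖ ≤ ‖(1 - P) W‖ = ‖W (1 - P)‖` because `W` is skew. -/
lemma exists_symm_mul_planeProj_eq (h : OrthonormalPair u v) {W : Matrix ι ι ℝ}
    (hW : Wᵀ = -W) : ∃ U : Matrix ι ι ℝ, Uᵀ = U ∧ frobSq U ≤ frobSq W ∧
      U * planeProj u v = W * planeRot u v := by
  set P := planeProj u v
  set J := planeRot u v
  set c := u ⬝ᵥ W *ᵥ v
  set M := W * J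
  have hPt : Pᵀ = P := transpose_planeProj u v
  have hPP : P * P = P := h.planeProj_mul_planeProj
  have hMtP : Mᵀ * P = -c • P := h.transpose_mul_planeRot_mul_planeProj hW
  have hQt : (1 - P)ᵀ = 1 - P := by rw [transpose_sub, transpose_one, hPt]
  set U := M + Mᵀ + c • P
  have hUP : U * P = M := by
    rw [add_mul, add_mul, hMtP, smul_mul, hPP, Matrix.mul_assoc, h.planeRot_mul_planeProj]
    module
  have hUQ : U * (1 - P) = ((1 - P) * W * J)ᵀ := by
    calc U * (1 - P) = Mᵀ + c • P := by
          rw [mul_sub, Matrix.mul_one, hUP]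
          simp only [U]
          abel
      _ = Mᵀ * (1 - P) := by
          rw [mul_sub, Matrix.mul_one, hMtP]
          module
      _ = ((1 - P) * W * J)ᵀ := by rw [Matrix.mul_assoc, transpose_mul (1 - P), hQt]
  have hU : frobSq U = frobSq (W * P) + frobSq ((1 - P) * W * P) := by
    rw [frobSq_eq_add_of_isProj hPt hPP U, hUP, hUQ, frobSq_transpose, h.frobSq_mul_planeRot,
      h.frobSq_mul_planeRot]
  have hWQ : frobSq (W * (1 - P)) = frobSq ((1 - P) * W) := by
    rw [← frobSq_transpose, transpose_mul, hQt, hW, mul_neg, frobSq_neg]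
  refine ⟨U, ?_, ?_, hUP⟩
  · rw [transpose_add, transpose_add, transpose_transpose, transpose_smul, hPt, add_comm Mᵀ M]
  · rw [hU, frobSq_eq_add_of_isProj hPt hPP W, hWQ,
      frobSq_eq_add_of_isProj hPt hPP ((1 - P) * W)]
    linarith [frobSq_nonneg ((1 - P) * W * (1 - P))]

end OrthonormalPair

lemma exists_orthonormalPair [DecidableEq ι] [Nontrivial ι] :
    ∃ u v : ι → ℝ, OrthonormalPair u v := by
  obtain ⟨i, j, hij⟩ := exists_pair_ne ι
  exact ⟨Pi.single i 1, Pi.single j 1, by simp, by simp, by simp [hij]⟩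

lemma exists_smul_dotProduct_self_eq_one {w : ι → ℝ} (hw : w ≠ 0) :
    ∃ c : ℝ, (c • w) ⬝ᵥ (c • w) = 1 := by
  have hnonneg : 0 ≤ w ⬝ᵥ w := Finset.sum_nonneg fun i _ => mul_self_nonneg (w i)
  refine ⟨(√(w ⬝ᵥ w))⁻¹, ?_⟩
  rw [dotProduct_smul, smul_dotProduct, smul_eq_mul, smul_eq_mul, ← mul_assoc, ← sq, inv_pow,
    Real.sq_sqrt hnonneg, inv_mul_cancel₀ (dotProduct_self_eq_zero.not.mpr hw)]

/-- Normalize `v = B x` and then `u = B v`; `u ⟂ v` because `B` is skew. -/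
lemma exists_orthonormalPair_mem_range_of_skew {B : Matrix ι ι ℝ} (hB : Bᵀ = -B)
    (hB0 : B ≠ 0) : ∃ u v : ι → ℝ, OrthonormalPair u v ∧
      u ∈ LinearMap.range B.mulVecLin ∧ v ∈ LinearMap.range B.mulVecLin := by
  obtain ⟨x, hx⟩ : ∃ x, B *ᵥ x ≠ 0 := by
    by_contra! h
    exact hB0 (ext_iff_mulVec.mpr fun x => by simp [h x])
  obtain ⟨c, hc⟩ := exists_smul_dotProduct_self_eq_one hx
  set v := c • B *ᵥ x
  have hBv : B *ᵥ v ≠ 0 := by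
    intro h0
    have := dotProduct_mulVec_of_skew hB v (c • x)
    rw [mulVec_smul, h0, dotProduct_zero, neg_zero, hc] at this
    exact one_ne_zero this
  obtain ⟨d, hd⟩ := exists_smul_dotProduct_self_eq_one hBv
  refine ⟨d • B *ᵥ v, v, ⟨hd, hc, ?_⟩, ⟨d • v, by simp⟩,
    ⟨c • x, by simp [v]⟩⟩
  rw [smul_dotProduct, dotProduct_comm, dotProduct_mulVec_self_of_skew hB, smul_zero]

/-- The range of `B` is the plane of `u, v`, so `B = P * B * P`. -/
lemma exists_eq_smul_planeRot_of_skew [DecidableEq ι] [Nontrivial ι] {B : Matrix ι ι ℝ}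
    (hB : Bᵀ = -B) (hr : B.rank ≤ 2) :
    ∃ u v : ι → ℝ, OrthonormalPair u v ∧ ∃ γ : ℝ, B = γ • planeRot u v := by
  rcases eq_or_ne B 0 with rfl | hB0
  · obtain ⟨u, v, h⟩ := exists_orthonormalPair (ι := ι)
    exact ⟨u, v, h, 0, by simp⟩
  obtain ⟨u, v, h, hu, hv⟩ := exists_orthonormalPair_mem_range_of_skew hB hB0
  have hrange : LinearMap.range B.mulVecLin = Submodule.span ℝ {u, v} :=
    (Submodule.eq_of_le_of_finrank_le (Submodule.span_le.mpr (Set.pair_subset hu hv))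
      (h.finrank_span ▸ hr)).symm
  have hPB : planeProj u v * B = B := ext_iff_mulVec.mpr fun z => by
    rw [← mulVec_mulVec, h.planeProj_mulVec_of_mem_span (hrange ▸ ⟨z, rfl⟩)]
  have hBP : B * planeProj u v = B := by
    simpa [hB, transpose_planeProj] using congrArg transpose hPB
  refine ⟨u, v, h, u ⬝ᵥ B *ᵥ v, ?_⟩
  rw [← planeProj_mul_mul_planeProj_of_skew hB, hPB, hBP]

lemma exists_symm_mul_mul_eq_of_skew [DecidableEq ι] [Nontrivial ι] {B W : Matrix ι ι ℝ}
    (hB : Bᵀ = -B) (hr : B.rank ≤ 2) (hW : Wᵀ = -W) :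
    ∃ U : Matrix ι ι ℝ, Uᵀ = U ∧ frobSq U ≤ frobSq W ∧ U * B * U = W * B * Wᵀ := by
  obtain ⟨u, v, h, γ, rfl⟩ := exists_eq_smul_planeRot_of_skew hB hr
  obtain ⟨U, hUt, hUW, hUP⟩ := h.exists_symm_mul_planeProj_eq hW
  refine ⟨U, hUt, hUW, ?_⟩
  simp only [Matrix.mul_smul, Matrix.smul_mul]
  rw [← h.mul_planeRot_mul_transpose_eq hUP, hUt]

lemma trace_mul_smul_mul_smul (A B U : Matrix ι ι ℝ) (c : ℝ) :
    (A * (c • U) * B * (c • U)).trace = c ^ 2 * (A * U * B * U).trace := by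
  simp only [Matrix.mul_smul, Matrix.smul_mul, trace_smul, smul_eq_mul]
  ring

section Fin

variable {n : ℕ}

lemma frobNorm_eq_one_iff {X : Matrix (Fin n) (Fin n) ℝ} : frobNorm X = 1 ↔ frobSq X = 1 :=
  Real.sqrt_eq_one

lemma Eset_comm (A B : Matrix (Fin n) (Fin n) ℝ) : Eset A B = Eset B A := by
  have hsub : ∀ A B : Matrix (Fin n) (Fin n) ℝ, Eset A B ⊆ Eset B A := by
    rintro A B _ ⟨U, hU, hU1, rfl⟩
    refine ⟨U, hU, hU1, ?_⟩
    rw [Matrix.mul_assoc (A * U), trace_mul_comm, ← Matrix.mul_assoc]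
  exact (hsub A B).antisymm (hsub B A)

lemma Oset_comm (A B : Matrix (Fin n) (Fin n) ℝ) : Oset A B = Oset B A := by
  have hsub : ∀ A B : Matrix (Fin n) (Fin n) ℝ, Oset A B ⊆ Oset B A := by
    rintro A B _ ⟨W, hW, hW1, rfl⟩
    refine ⟨Wᵀ, by rw [transpose_transpose, hW, neg_neg], ?_, ?_⟩
    · rwa [frobNorm, ← frobSq, frobSq_transpose]
    · rw [transpose_transpose, Matrix.mul_assoc (A * W), trace_mul_comm, ← Matrix.mul_assoc]
  exact (hsub A B).antisymm (hsub B A)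

section Frobenius

attribute [local instance] Matrix.frobeniusNormedAddCommGroup Matrix.frobeniusNormedSpace

lemma frobSq_eq_norm_sq (X : Matrix ι ι ℝ) : frobSq X = ‖X‖ ^ 2 := by
  rw [frobSq_eq_sum, frobenius_norm_def, ← Real.sqrt_eq_rpow, Real.sq_sqrt (by positivity)]
  simp

lemma isBounded_Eset (A B : Matrix (Fin n) (Fin n) ℝ) : Bornology.IsBounded (Eset A B) := by
  refine ((isCompact_sphere (0 : Matrix (Fin n) (Fin n) ℝ) 1).image
    (f := fun U => (A * U * B * U).trace) (by fun_prop)).isBounded.subset ?_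
  rintro _ ⟨U, -, hU1, rfl⟩
  refine ⟨U, ?_, rfl⟩
  rw [frobNorm_eq_one_iff, frobSq_eq_norm_sq, pow_eq_one_iff_of_nonneg (norm_nonneg U)
    two_ne_zero] at hU1
  exact mem_sphere_zero_iff_norm.mpr hU1

end Frobenius

lemma zero_mem_Eset (A : Matrix (Fin n) (Fin n) ℝ) {B : Matrix (Fin n) (Fin n) ℝ}
    (hB : Bᵀ = -B) {u : Fin n → ℝ} (hu : u ⬝ᵥ u = 1) : (0 : ℝ) ∈ Eset A B := by
  refine ⟨vecMulVec u u, transpose_vecMulVec u u, ?_, ?_⟩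
  · rw [frobNorm_eq_one_iff, frobSq, transpose_vecMulVec, vecMulVec_mul_vecMulVec, hu, one_smul,
      trace_vecMulVec, hu]
  · rw [Matrix.mul_assoc (A * _) B, mul_vecMulVec B, Matrix.mul_assoc A, vecMulVec_mul_vecMulVec,
      dotProduct_mulVec_self_of_skew hB, zero_smul, vecMulVec_zero, Matrix.mul_zero,
      trace_zero]

lemma Oset_nonempty (A B : Matrix (Fin n) (Fin n) ℝ) {u v : Fin n → ℝ}
    (h : OrthonormalPair u v) : (Oset A B).Nonempty := by
  refine ⟨_, (√2)⁻¹ • planeRot u v, ?_, ?_, rfl⟩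
  · rw [transpose_smul, transpose_planeRot, smul_neg]
  · rw [frobNorm_eq_one_iff, frobSq_smul, h.frobSq_planeRot, inv_pow, Real.sq_sqrt zero_le_two,
      inv_mul_cancel₀ two_ne_zero]

lemma trace_mul_mem_Icc {A B U : Matrix (Fin n) (Fin n) ℝ} (h0 : (0 : ℝ) ∈ Eset A B)
    (hU : Uᵀ = U) (hU1 : frobSq U ≤ 1) :
    (A * U * B * U).trace ∈ Set.Icc (sInf (Eset A B)) (sSup (Eset A B)) := by
  have hE : Eset A B ⊆ Set.Icc (sInf (Eset A B)) (sSup (Eset A B)) := fun t ht =>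
    ⟨csInf_le (isBounded_Eset A B).bddBelow ht, le_csSup (isBounded_Eset A B).bddAbove ht⟩
  rcases (frobSq_nonneg U).eq_or_lt with hs | hs
  · rw [eq_comm, frobSq_eq_zero_iff] at hs
    simpa [hs] using hE h0
  set s := frobSq U
  have hscaled : (A * ((√s)⁻¹ • U) * B * ((√s)⁻¹ • U)).trace ∈ Eset A B := by
    refine ⟨(√s)⁻¹ • U, by rw [transpose_smul, hU], ?_, rfl⟩
    rw [frobNorm_eq_one_iff, frobSq_smul, inv_pow, Real.sq_sqrt hs.le, inv_mul_cancel₀ hs.ne']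
  have hcombo := convex_Icc (sInf (Eset A B)) (sSup (Eset A B)) (hE hscaled) (hE h0)
    hs.le (sub_nonneg.mpr hU1) (add_sub_cancel s 1)
  rw [trace_mul_smul_mul_smul, inv_pow, Real.sq_sqrt hs.le, smul_eq_mul, smul_zero, add_zero,
    ← mul_assoc, mul_inv_cancel₀ hs.ne', one_mul] at hcombo
  exact hcombo

lemma Oset_subset_Icc [Nontrivial (Fin n)] {A B : Matrix (Fin n) (Fin n) ℝ} (hB : Bᵀ = -B)
    (hr : B.rank ≤ 2) (h0 : (0 : ℝ) ∈ Eset A B) :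
    Oset A B ⊆ Set.Icc (sInf (Eset A B)) (sSup (Eset A B)) := by
  rintro _ ⟨W, hW, hW1, rfl⟩
  obtain ⟨U, hU, hUW, hUBU⟩ := exists_symm_mul_mul_eq_of_skew hB hr hW
  have hval : A * W * B * Wᵀ = A * U * B * U := by
    simp only [Matrix.mul_assoc] at hUBU ⊢
    rw [hUBU]
  rw [hval]
  exact trace_mul_mem_Icc h0 hU (hUW.trans (frobNorm_eq_one_iff.mp hW1).le)

end Fin

theorem stmt_6 (n : ℕ) (hn : 2 ≤ n) (A B : Matrix (Fin n) (Fin n) ℝ)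
    (hA : Aᵀ = -A) (hB : Bᵀ = -B) (hrank : min A.rank B.rank ≤ 2) :
    sInf (Eset A B) ≤ sInf (Oset A B) ∧ sSup (Oset A B) ≤ sSup (Eset A B) := by
  have : Nontrivial (Fin n) := Fin.nontrivial_iff_two_le.mpr hn
  wlog hB2 : B.rank ≤ 2 generalizing A B
  · rw [Eset_comm, Oset_comm]
    exact this B A hB hA (by rwa [min_comm]) (by omega)
  obtain ⟨u, v, huv⟩ := exists_orthonormalPair (ι := Fin n)
  have hsub := Oset_subset_Icc hB hB2 (zero_mem_Eset A hB huv.dotProduct_self_left)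
  exact ⟨le_csInf (Oset_nonempty A B huv) fun t ht => (hsub ht).1,
    csSup_le (Oset_nonempty A B huv) fun t ht => (hsub ht).2⟩
end

section
/- Let A, B be 2×2 real symmetric matrices and let W₀ := (1/√2)·[[0,1],[−1,0]]. Then inf E(A,B) ≤ trace(A·W₀·B·W₀ᵀ) ≤ sup E(A,B). -/
open Matrix

noncomputable def W₀ : Matrix (Fin 2) (Fin 2) ℝ :=
  (Real.sqrt 2)⁻¹ • !![0, 1; -1, 0]

/-!
Write `A = !![a, b; b, d]` and `B = !![p, q; q, r]`. Then
`trace (A W₀ B W₀ᵀ) = (a r + d p - 2 b q) / 2`, while for a reflection `R = !![c, s; s, -c]`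
`trace (A R B R) = (a r + d p - 2 b q) (c² + s²) + ((a - d) c + 2 b s) ((p - r) c + 2 q s)`
and `‖R‖_F² = 2 (c² + s²)`. Taking `(c, s) ≠ 0` on the line `(a - d) c + 2 b s = 0` kills the
product term, so the value at `W₀` is attained at the normalised `R` and lies in `E(A, B)`.
That set is bounded, being contained in the image of the compact Frobenius unit sphere.
-/

section Frobenius

attribute [local instance] Matrix.frobeniusNormedAddCommGroup Matrix.frobeniusNormedSpace

variable {n : ℕ}

lemma frobNorm_eq_norm (U : Matrix (Fin n) (Fin n) ℝ) : frobNorm U = ‖U‖ := by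
  rw [frobNorm, frobenius_norm_def, ← Real.sqrt_eq_rpow, Finset.sum_comm]
  simp [trace, mul_apply, sq]

lemma frobNorm_ne_zero {U : Matrix (Fin n) (Fin n) ℝ} (hU : U ≠ 0) : frobNorm U ≠ 0 := by
  rwa [frobNorm_eq_norm, norm_ne_zero_iff]

lemma Eset_subset_image_sphere (A B : Matrix (Fin n) (Fin n) ℝ) :
    Eset A B ⊆ (fun U ↦ (A * U * B * U).trace) '' Metric.sphere 0 1 := by
  rintro _ ⟨U, -, hU, rfl⟩
  exact ⟨U, by simpa [frobNorm_eq_norm] using hU, rfl⟩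

lemma isCompact_trace_image_sphere (A B : Matrix (Fin n) (Fin n) ℝ) :
    IsCompact
      ((fun U ↦ (A * U * B * U).trace) '' Metric.sphere (0 : Matrix (Fin n) (Fin n) ℝ) 1) :=
  (isCompact_sphere 0 1).image (by fun_prop)

lemma bddBelow_Eset (A B : Matrix (Fin n) (Fin n) ℝ) : BddBelow (Eset A B) :=
  (isCompact_trace_image_sphere A B).bddBelow.mono (Eset_subset_image_sphere A B)

lemma bddAbove_Eset (A B : Matrix (Fin n) (Fin n) ℝ) : BddAbove (Eset A B) :=
  (isCompact_trace_image_sphere A B).bddAbove.mono (Eset_subset_image_sphere A B)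

lemma trace_div_frobNorm_sq_mem_Eset (A B : Matrix (Fin n) (Fin n) ℝ)
    {U : Matrix (Fin n) (Fin n) ℝ} (hU : Uᵀ = U) (hU₀ : U ≠ 0) :
    (A * U * B * U).trace / frobNorm U ^ 2 ∈ Eset A B := by
  have hnorm : ‖U‖ ≠ 0 := frobNorm_eq_norm U ▸ frobNorm_ne_zero hU₀
  refine ⟨‖U‖⁻¹ • U, by rw [transpose_smul, hU], ?_, ?_⟩
  · rw [frobNorm_eq_norm, norm_smul, norm_inv, norm_norm, inv_mul_cancel₀ hnorm]
  · simp only [frobNorm_eq_norm, Matrix.mul_smul, Matrix.smul_mul, trace_smul, smul_eq_mul]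
    field_simp

end Frobenius

lemma eq_of_transpose_eq_fin_two {A : Matrix (Fin 2) (Fin 2) ℝ} (hA : Aᵀ = A) :
    A = !![A 0 0, A 0 1; A 0 1, A 1 1] := by
  have h₁₀ : A 1 0 = A 0 1 := congrFun₂ hA 0 1
  conv_lhs => rw [eta_fin_two A]
  rw [h₁₀]

lemma transpose_reflection (c s : ℝ) : !![c, s; s, -c]ᵀ = !![c, s; s, -c] := by
  ext i j; fin_cases i <;> fin_cases j <;> rfl

lemma frobNorm_reflection_sq (c s : ℝ) : frobNorm !![c, s; s, -c] ^ 2 = 2 * (c ^ 2 + s ^ 2) := by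
  have htrace : (!![c, s; s, -c]ᵀ * !![c, s; s, -c]).trace = 2 * (c ^ 2 + s ^ 2) := by
    rw [transpose_reflection, mul_fin_two, trace_fin_two_of]
    ring
  rw [frobNorm, htrace, Real.sq_sqrt (by positivity)]

lemma trace_mul_reflection_mul_reflection (a b d p q r c s : ℝ) :
    (!![a, b; b, d] * !![c, s; s, -c] * !![p, q; q, r] * !![c, s; s, -c]).trace =
      (a * r + d * p - 2 * b * q) * (c ^ 2 + s ^ 2) +
        ((a - d) * c + 2 * b * s) * ((p - r) * c + 2 * q * s) := by
  simp only [mul_fin_two, trace_fin_two_of]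
  ring

lemma exists_reflection_ne_zero_of_linear_eq_zero (α β : ℝ) :
    ∃ c s : ℝ, !![c, s; s, -c] ≠ 0 ∧ α * c + β * s = 0 := by
  rcases eq_or_ne β 0 with rfl | hβ
  · exact ⟨0, 1, fun h ↦ one_ne_zero (congrFun₂ h 0 1), by ring⟩
  · exact ⟨β, -α, fun h ↦ hβ (congrFun₂ h 0 0), by ring⟩

lemma transpose_W₀ : W₀ᵀ = -W₀ := by
  ext i j; fin_cases i <;> fin_cases j <;> simp [W₀]

lemma trace_mul_W₀_mul_transpose (a b d p q r : ℝ) :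
    (!![a, b; b, d] * W₀ * !![p, q; q, r] * W₀ᵀ).trace = (a * r + d * p - 2 * b * q) / 2 := by
  have h : (Real.sqrt 2)⁻¹ * (Real.sqrt 2)⁻¹ = (1 / 2 : ℝ) := by
    rw [← mul_inv, Real.mul_self_sqrt zero_le_two, one_div]
  rw [transpose_W₀, W₀]
  simp only [Matrix.mul_neg, Matrix.mul_smul, Matrix.smul_mul, trace_neg, trace_smul, mul_fin_two,
    trace_fin_two_of, smul_eq_mul]
  linear_combination (a * r + d * p - 2 * b * q) * h

lemma half_mem_Eset_fin_two (a b d p q r : ℝ) :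
    (a * r + d * p - 2 * b * q) / 2 ∈ Eset !![a, b; b, d] !![p, q; q, r] := by
  obtain ⟨c, s, hR, hline⟩ := exists_reflection_ne_zero_of_linear_eq_zero (a - d) (2 * b)
  have htrace := trace_mul_reflection_mul_reflection a b d p q r c s
  rw [hline, zero_mul, add_zero] at htrace
  have hmem :=
    trace_div_frobNorm_sq_mem_Eset !![a, b; b, d] !![p, q; q, r] (transpose_reflection c s) hR
  have hcs : c ^ 2 + s ^ 2 ≠ 0 :=
    right_ne_zero_of_mul (frobNorm_reflection_sq c s ▸ pow_ne_zero 2 (frobNorm_ne_zero hR))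
  rwa [htrace, frobNorm_reflection_sq, mul_div_mul_right _ _ hcs] at hmem

theorem stmt_7 (A B : Matrix (Fin 2) (Fin 2) ℝ) (hA : Aᵀ = A) (hB : Bᵀ = B) :
    sInf (Eset A B) ≤ (A * W₀ * B * W₀ᵀ).trace ∧
      (A * W₀ * B * W₀ᵀ).trace ≤ sSup (Eset A B) := by
  have hmem : (A * W₀ * B * W₀ᵀ).trace ∈ Eset A B := by
    rw [eq_of_transpose_eq_fin_two hA, eq_of_transpose_eq_fin_two hB, trace_mul_W₀_mul_transpose]
    exact half_mem_Eset_fin_two _ _ _ _ _ _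
  exact ⟨csInf_le (bddBelow_Eset A B) hmem, le_csSup (bddAbove_Eset A B) hmem⟩
end

section
/- Let A, B be 3×3 real symmetric matrices. Then for every skew-symmetric matrix W ∈ K³ with ‖W‖_F = 1 there exists a symmetric matrix U ∈ S³ with ‖U‖_F = 1 such that trace(A·U·B·U) = trace(A·W·B·Wᵀ). -/
/-
A skew `3 × 3` matrix `W ≠ 0` is `c (u vᵀ - v uᵀ)` with `u, v` orthonormal, so `W B Wᵀ` only sees the
compression `b` of `B` to the plane of `u, v`, on which it acts as `c² adj b`. A symmetric
`U = c R`, with `R` the reflection of that plane anticommuting with the trace-free part of `b`, has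
the norm of `W` and satisfies `R b R = adj b`. Hence `U B U = W B Wᵀ`, and the traces against any
`A` agree.
-/

open Matrix

section Wedge
variable {n R : Type*} [CommRing R]

def wedge (u v : n → R) : Matrix n n R := vecMulVec u v - vecMulVec v u

def planeReflection (u v : n → R) (s k : R) : Matrix n n R :=
  s • (vecMulVec u u - vecMulVec v v) + k • (vecMulVec u v + vecMulVec v u)

lemma transpose_wedge (u v : n → R) : (wedge u v)ᵀ = -wedge u v := by
  simp only [wedge, transpose_sub, transpose_vecMulVec, neg_sub]

lemma transpose_planeReflection (u v : n → R) (s k : R) :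
    (planeReflection u v s k)ᵀ = planeReflection u v s k := by
  simp only [planeReflection, transpose_add, transpose_smul, transpose_sub, transpose_vecMulVec]
  rw [add_comm (vecMulVec v u)]

variable [Fintype n]

lemma vecMulVec_mul_mul_vecMulVec (a b c d : n → R) (B : Matrix n n R) :
    vecMulVec a b * B * vecMulVec c d = (b ⬝ᵥ B *ᵥ c) • vecMulVec a d := by
  rw [vecMulVec_mul, vecMulVec_mul_vecMulVec, ← dotProduct_mulVec, vecMulVec_smul]

lemma dotProduct_mulVec_comm_of_transpose_eq {B : Matrix n n R} (hB : Bᵀ = B) (u v : n → R) :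
    v ⬝ᵥ B *ᵥ u = u ⬝ᵥ B *ᵥ v := by
  rw [dotProduct_mulVec, ← mulVec_transpose, hB, dotProduct_comm]

lemma planeReflection_mul_mul_planeReflection (u v : n → R) (s k : R) {B : Matrix n n R}
    (hB : Bᵀ = B) (hsk : s ^ 2 + k ^ 2 = 1)
    (horth : s * (u ⬝ᵥ B *ᵥ u - v ⬝ᵥ B *ᵥ v) + k * (2 * (u ⬝ᵥ B *ᵥ v)) = 0) :
    planeReflection u v s k * B * planeReflection u v s k = wedge u v * B * (wedge u v)ᵀ := by
  simp only [planeReflection, wedge, transpose_sub, transpose_vecMulVec, add_mul, mul_add, sub_mul,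
    mul_sub, Matrix.smul_mul, Matrix.mul_smul, vecMulVec_mul_mul_vecMulVec,
    dotProduct_mulVec_comm_of_transpose_eq hB u v]
  linear_combination (norm := module)
    horth • (s • (vecMulVec u u - vecMulVec v v) + k • (vecMulVec u v + vecMulVec v u)) +
    hsk • ((v ⬝ᵥ B *ᵥ v) • vecMulVec u u - (u ⬝ᵥ B *ᵥ v) • (vecMulVec u v + vecMulVec v u) +
      (u ⬝ᵥ B *ᵥ u) • vecMulVec v v)

section Orthonormal
variable {u v : n → R} (hu : u ⬝ᵥ u = 1) (hv : v ⬝ᵥ v = 1) (huv : u ⬝ᵥ v = 0)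
include hu hv huv

lemma trace_planeReflection_mul_self (s k : R) :
    (planeReflection u v s k * planeReflection u v s k).trace = 2 * (s ^ 2 + k ^ 2) := by
  simp only [planeReflection, add_mul, mul_add, sub_mul, mul_sub, Matrix.smul_mul, Matrix.mul_smul,
    vecMulVec_mul_vecMulVec, trace_add, trace_sub, trace_smul, trace_vecMulVec, dotProduct_smul,
    dotProduct_comm v u, hu, hv, huv, smul_eq_mul]
  ring

lemma trace_transpose_wedge_mul_wedge : ((wedge u v)ᵀ * wedge u v).trace = 2 := by
  rw [transpose_wedge]
  simp only [wedge, neg_mul, sub_mul, mul_sub, vecMulVec_mul_vecMulVec, trace_neg,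
    trace_sub, trace_vecMulVec, dotProduct_smul, dotProduct_comm v u, hu, hv, huv, smul_eq_mul]
  ring

end Orthonormal

lemma wedge_mulVec_eq_cross (p q x : Fin 3 → R) : wedge p q *ᵥ x = (q ⨯₃ p) ⨯₃ x := by
  rw [wedge, sub_mulVec, vecMulVec_mulVec, vecMulVec_mulVec, cross_cross_eq_smul_sub_smul]
  simp

end Wedge

lemma exists_unit_orthogonal (x y : ℝ) : ∃ s k : ℝ, s ^ 2 + k ^ 2 = 1 ∧ s * x + k * y = 0 := by
  set z : ℂ := ⟨x, y⟩
  refine ⟨Real.sin z.arg, -Real.cos z.arg, by rw [neg_sq, Real.sin_sq_add_cos_sq], ?_⟩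
  rw [← show ‖z‖ * Real.cos z.arg = x from Complex.norm_mul_cos_arg z,
    ← show ‖z‖ * Real.sin z.arg = y from Complex.norm_mul_sin_arg z]
  ring

theorem exists_transpose_eq_self_mul_mul_eq_smul_wedge {n : Type*} [Fintype n]
    {B : Matrix n n ℝ} (hB : Bᵀ = B) {u v : n → ℝ} (hu : u ⬝ᵥ u = 1) (hv : v ⬝ᵥ v = 1)
    (huv : u ⬝ᵥ v = 0) (c : ℝ) :
    ∃ U : Matrix n n ℝ, Uᵀ = U ∧
      (Uᵀ * U).trace = ((c • wedge u v)ᵀ * (c • wedge u v)).trace ∧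
      U * B * U = c • wedge u v * B * (c • wedge u v)ᵀ := by
  obtain ⟨s, k, hsk, horth⟩ :=
    exists_unit_orthogonal (u ⬝ᵥ B *ᵥ u - v ⬝ᵥ B *ᵥ v) (2 * (u ⬝ᵥ B *ᵥ v))
  refine ⟨c • planeReflection u v s k, by rw [transpose_smul, transpose_planeReflection], ?_, ?_⟩
  · simp only [transpose_smul, transpose_planeReflection, Matrix.smul_mul, Matrix.mul_smul,
      trace_smul, trace_planeReflection_mul_self hu hv huv, trace_transpose_wedge_mul_wedge hu hv huv,
      hsk, mul_one]
  · simp only [transpose_smul, Matrix.smul_mul, Matrix.mul_smul,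
      planeReflection_mul_mul_planeReflection u v s k hB hsk horth]

section FinThree

def axialVector (W : Matrix (Fin 3) (Fin 3) ℝ) : Fin 3 → ℝ := ![W 2 1, W 0 2, W 1 0]

lemma exists_unit_orthogonal_fin_three (w : Fin 3 → ℝ) :
    ∃ v : Fin 3 → ℝ, v ⬝ᵥ v = 1 ∧ w ⬝ᵥ v = 0 := by
  obtain ⟨s, k, hsk, horth⟩ := exists_unit_orthogonal (w 0) (w 1)
  refine ⟨![s, k, 0], ?_, ?_⟩ <;> simp only [vec3_dotProduct, cons_val]
  · linear_combination hsk
  · linear_combination horth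

variable {W : Matrix (Fin 3) (Fin 3) ℝ} (hW : Wᵀ = -W)
include hW

lemma mulVec_eq_axialVector_cross (x : Fin 3 → ℝ) : W *ᵥ x = axialVector W ⨯₃ x := by
  have h (i j : Fin 3) : W j i = -W i j := by simpa using congrFun (congrFun hW i) j
  have hdiag (i : Fin 3) : W i i = 0 := by linarith [h i i]
  ext i
  fin_cases i <;>
  · simp only [axialVector, cross_apply, mulVec, vec3_dotProduct, hdiag, h 0 1, h 1 2, h 2 0,
      Fin.zero_eta, Fin.mk_one, Fin.reduceFinMk, Fin.isValue, cons_val_zero, cons_val_one, cons_val]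
    ring

/-- `W` acts as `x ↦ w × x` and `wedge (W v) v` as `x ↦ (v × (w × v)) × x`, where `w` is the axial
vector; these agree because `v × (w × v) = w` for a unit vector `v ⊥ w`. -/
lemma eq_wedge_mulVec_of_skew {v : Fin 3 → ℝ} (hv : v ⬝ᵥ v = 1) (hwv : axialVector W ⬝ᵥ v = 0) :
    W = wedge (W *ᵥ v) v := by
  refine ext_iff_mulVec.2 fun x => ?_
  rw [wedge_mulVec_eq_cross, mulVec_eq_axialVector_cross hW, mulVec_eq_axialVector_cross hW,
    cross_cross_eq_smul_sub_smul', hv, hwv, one_smul, zero_smul, sub_zero]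

lemma exists_eq_smul_wedge_of_skew (hW0 : W ≠ 0) :
    ∃ (c : ℝ) (u v : Fin 3 → ℝ), u ⬝ᵥ u = 1 ∧ v ⬝ᵥ v = 1 ∧ u ⬝ᵥ v = 0 ∧ W = c • wedge u v := by
  obtain ⟨v, hv, hwv⟩ := exists_unit_orthogonal_fin_three (axialVector W)
  have hWv := eq_wedge_mulVec_of_skew hW hv hwv
  have hpv : W *ᵥ v ⬝ᵥ v = 0 := by
    rw [mulVec_eq_axialVector_cross hW, dotProduct_comm, dot_cross_self]
  set p := W *ᵥ v
  have hp : p ⬝ᵥ p ≠ 0 := by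
    rw [Ne, dotProduct_self_eq_zero]
    rintro hp0
    exact hW0 (by rw [hWv, hp0]; simp [wedge])
  set c := √(p ⬝ᵥ p)
  have hc2 : c ^ 2 = p ⬝ᵥ p := Real.sq_sqrt (Finset.sum_nonneg fun i _ => mul_self_nonneg (p i))
  have hc : c ≠ 0 := fun h => hp (by rw [← hc2, h]; ring)
  refine ⟨c, c⁻¹ • p, v, ?_, hv, ?_, ?_⟩
  · rw [smul_dotProduct, dotProduct_smul, ← hc2, smul_eq_mul, smul_eq_mul]
    field_simp
  · rw [smul_dotProduct, hpv, smul_zero]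
  · rw [hWv, wedge, wedge, smul_vecMulVec, vecMulVec_smul, ← smul_sub, smul_inv_smul₀ hc]

end FinThree

theorem stmt_8_general (A B : Matrix (Fin 3) (Fin 3) ℝ) (hB : Bᵀ = B)
    (W : Matrix (Fin 3) (Fin 3) ℝ) (hW : Wᵀ = -W) (hWn : frobNorm W = 1) :
    ∃ U : Matrix (Fin 3) (Fin 3) ℝ, Uᵀ = U ∧ frobNorm U = 1 ∧
      (A * U * B * U).trace = (A * W * B * Wᵀ).trace := by
  have hW0 : W ≠ 0 := by
    rintro rfl
    simp [frobNorm] at hWn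
  obtain ⟨c, u, v, hu, hv, huv, rfl⟩ := exists_eq_smul_wedge_of_skew hW hW0
  obtain ⟨U, hUsymm, hUnorm, hUBU⟩ :=
    exists_transpose_eq_self_mul_mul_eq_smul_wedge hB hu hv huv c
  refine ⟨U, hUsymm, by rw [← hWn, frobNorm, frobNorm, hUnorm], ?_⟩
  simp only [Matrix.mul_assoc] at hUBU ⊢
  rw [hUBU]

theorem stmt_8 (A B : Matrix (Fin 3) (Fin 3) ℝ) (hA : Aᵀ = A) (hB : Bᵀ = B)
    (W : Matrix (Fin 3) (Fin 3) ℝ) (hW : Wᵀ = -W) (hWn : frobNorm W = 1) :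
    ∃ U : Matrix (Fin 3) (Fin 3) ℝ, Uᵀ = U ∧ frobNorm U = 1 ∧
      (A * U * B * U).trace = (A * W * B * Wᵀ).trace :=
  stmt_8_general A B hB W hW hWn
end

section
/- Let n ≥ 2 and let B be an n×n real symmetric matrix whose largest eigenvalue λ₁(B) has multiplicity 1 (a one-dimensional eigenspace). Then for every skew-symmetric matrix W ∈ Kⁿ with ‖W‖_F = 1 one has trace(W·B·Wᵀ) < λ₁(B). -/
open Matrix

/-!
In an orthonormal eigenbasis of `B`, `W` becomes a skew-symmetric `M` with `∑ M i j ^ 2 = 1`, and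
`trace (W B Wᵀ) = ∑ M i j ^ 2 * λ j` is a convex combination of eigenvalues. It can reach `λ₁` only
if `M` is supported on the column of the simple top eigenvalue, and skew-symmetry then forces
`M = 0`.
-/

open Unitary

namespace Matrix

variable {m n R : Type*}

theorem eq_zero_of_transpose_eq_neg_of_support_col [Ring R] [NoZeroDivisors R] [CharZero R]
    {M : Matrix n n R} (hM : Mᵀ = -M) (j₀ : n) (hcol : ∀ i j, M i j ≠ 0 → j = j₀) :
    M = 0 := by
  ext i j
  by_contra hij
  have hskew (i j : n) : M j i = -M i j := by simpa using congrFun (congrFun hM i) j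
  have hji : M j i ≠ 0 := by rwa [hskew, neg_ne_zero]
  obtain rfl : i = j := (hcol j i hji).trans (hcol i j hij).symm
  exact hij (CharZero.eq_neg_self_iff.mp (hskew i i))

variable [Fintype m] [Fintype n]

theorem trace_mul_diagonal_mul_transpose [CommSemiring R] [DecidableEq n]
    (M : Matrix m n R) (d : n → R) :
    (M * diagonal d * Mᵀ).trace = ∑ i, ∑ j, M i j ^ 2 * d j := by
  simp only [trace, diag, mul_apply (M := M * diagonal d), mul_diagonal, transpose_apply]
  exact Finset.sum_congr rfl fun i _ => Finset.sum_congr rfl fun j _ => by ring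

theorem trace_transpose_mul_self [CommSemiring R] (M : Matrix m n R) :
    (Mᵀ * M).trace = ∑ i, ∑ j, M i j ^ 2 := by
  simp only [trace, diag, mul_apply, transpose_apply, sq]
  exact Finset.sum_comm

variable [DecidableEq n] [CommRing R] [StarRing R]

theorem trace_conjStarAlgAut (u : unitary (Matrix n n R)) (X : Matrix n n R) :
    (conjStarAlgAut R _ u X).trace = X.trace := by
  rw [conjStarAlgAut_apply, trace_mul_cycle, coe_star_mul_self, one_mul]

theorem transpose_conjStarAlgAut [TrivialStar R] (u : unitary (Matrix n n R))
    (X : Matrix n n R) : (conjStarAlgAut R _ u X)ᵀ = conjStarAlgAut R _ u Xᵀ := by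
  simpa only [star_eq_conjTranspose, conjTranspose_eq_transpose_of_trivial] using
    (map_star (conjStarAlgAut R _ u) X).symm

end Matrix

theorem sum_sq_mul_lt_mul_sum_sq {m n : Type*} [Fintype m] [Fintype n] {x : m → n → ℝ} {d : n → ℝ}
    {s : ℝ} (hd : ∀ j, d j ≤ s) {i₀ : m} {j₀ : n} (hx : x i₀ j₀ ≠ 0) (hlt : d j₀ < s) :
    ∑ i, ∑ j, x i j ^ 2 * d j < s * ∑ i, ∑ j, x i j ^ 2 := by
  have hterm : ∀ i j, x i j ^ 2 * d j ≤ s * x i j ^ 2 := fun i j => by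
    rw [mul_comm s]; exact mul_le_mul_of_nonneg_left (hd j) (sq_nonneg _)
  have hterm₀ : x i₀ j₀ ^ 2 * d j₀ < s * x i₀ j₀ ^ 2 := by
    rw [mul_comm s]; exact mul_lt_mul_of_pos_left hlt (by positivity)
  simp only [Finset.mul_sum]
  refine Finset.sum_lt_sum (fun i _ => Finset.sum_le_sum fun j _ => hterm i j)
    ⟨i₀, Finset.mem_univ _, ?_⟩
  exact Finset.sum_lt_sum (fun j _ => hterm i₀ j) ⟨j₀, Finset.mem_univ _, hterm₀⟩

theorem stmt_12_general (n : ℕ) (B : Matrix (Fin n) (Fin n) ℝ)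
    (hB : B.IsHermitian)
    (hmax : (Finset.univ.filter
        (fun i => hB.eigenvalues i = ⨆ j, hB.eigenvalues j)).card = 1)
    (W : Matrix (Fin n) (Fin n) ℝ) (hW : Wᵀ = -W) (hWn : frobNorm W = 1) :
    (W * B * Wᵀ).trace < ⨆ j, hB.eigenvalues j := by
  obtain ⟨j₀, hj₀⟩ := Finset.card_eq_one.mp hmax
  set lmax := ⨆ j, hB.eigenvalues j
  have hle (j) : hB.eigenvalues j ≤ lmax := le_ciSup (Finite.bddAbove_range _) j
  have hlt (j) (hj : j ≠ j₀) : hB.eigenvalues j < lmax :=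
    (hle j).lt_of_ne fun h =>
      hj ((Finset.eq_singleton_iff_unique_mem.mp hj₀).2 j (by simpa using h))
  let U := hB.eigenvectorUnitary
  have hB' : B = conjStarAlgAut ℝ _ U (diagonal hB.eigenvalues) := by
    simpa using hB.spectral_theorem
  obtain ⟨M, rfl⟩ : ∃ M, W = conjStarAlgAut ℝ _ U M :=
    ⟨conjStarAlgAut ℝ _ (star U) W, by rw [← conjStarAlgAut_mul_apply, mul_star_self, map_one]; rfl⟩
  have hM : Mᵀ = -M := by
    rwa [transpose_conjStarAlgAut, ← map_neg, EquivLike.apply_eq_iff_eq] at hW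
  have hMn : ∑ i, ∑ j, M i j ^ 2 = 1 := by
    rwa [frobNorm, Real.sqrt_eq_one, transpose_conjStarAlgAut, ← map_mul, trace_conjStarAlgAut,
      trace_transpose_mul_self] at hWn
  have htrace : (conjStarAlgAut ℝ _ U M * B * (conjStarAlgAut ℝ _ U M)ᵀ).trace =
      ∑ i, ∑ j, M i j ^ 2 * hB.eigenvalues j := by
    conv_lhs => rw [hB', transpose_conjStarAlgAut, ← map_mul, ← map_mul, trace_conjStarAlgAut,
      trace_mul_diagonal_mul_transpose]
  obtain ⟨i, j, hij, hj⟩ : ∃ i j, M i j ≠ 0 ∧ j ≠ j₀ := by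
    by_contra! h
    simp [eq_zero_of_transpose_eq_neg_of_support_col hM j₀ h] at hMn
  rw [htrace]
  simpa [hMn] using sum_sq_mul_lt_mul_sum_sq hle hij (hlt j hj)

theorem stmt_12 (n : ℕ) (hn : 2 ≤ n) (B : Matrix (Fin n) (Fin n) ℝ)
    (hB : B.IsHermitian)
    (hmax : (Finset.univ.filter
        (fun i => hB.eigenvalues i = ⨆ j, hB.eigenvalues j)).card = 1)
    (W : Matrix (Fin n) (Fin n) ℝ) (hW : Wᵀ = -W) (hWn : frobNorm W = 1) :
    (W * B * Wᵀ).trace < ⨆ j, hB.eigenvalues j :=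
  stmt_12_general n B hB hmax W hW hWn
end

section
/- Let n ≥ 2 and let A, B be n×n real symmetric positive semidefinite matrices. Suppose there exists a nonzero vector v ∈ ℝⁿ with A·v = 0. Then the symmetric matrix U := (v·vᵀ)/(vᵀv) satisfies ‖U‖_F = 1 and trace(A·U·B·U) = 0, while for every skew-symmetric matrix W ∈ Kⁿ one has trace(A·W·B·Wᵀ) ≥ 0. Consequently inf E(A,B) ≤ inf O(A,B). -/
open Matrix

/-!
The unit rank-one projector `U` onto `v` satisfies `A * U = 0`, so `0 ∈ E(A, B)`. On the other
hand, writing `A = Cᴴ C`, cyclicity of the trace gives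
`trace (A W B Wᴴ) = trace ((C W) B (C W)ᴴ) ≥ 0` for every `W`, so `O(A, B) ⊆ [0, ∞)`.
-/

open scoped ComplexOrder MatrixOrder

namespace Matrix

theorem PosSemidef.trace_mul_mul_mul_conjTranspose_nonneg {ι 𝕜 : Type*} [Fintype ι] [RCLike 𝕜]
    {A B : Matrix ι ι 𝕜} (hA : A.PosSemidef) (hB : B.PosSemidef)
    (W : Matrix ι ι 𝕜) : 0 ≤ (A * W * B * Wᴴ).trace := by
  classical
  obtain ⟨C, rfl⟩ := CStarAlgebra.nonneg_iff_eq_star_mul_self.mp hA.nonneg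
  have hcycle : (star C * C * W * B * Wᴴ).trace = (C * W * B * (C * W)ᴴ).trace := by
    rw [conjTranspose_mul, star_eq_conjTranspose, Matrix.mul_assoc Cᴴ, Matrix.mul_assoc Cᴴ,
      Matrix.mul_assoc Cᴴ, trace_mul_comm Cᴴ]
    simp only [Matrix.mul_assoc]
  exact hcycle ▸ (hB.mul_mul_conjTranspose_same (C * W)).trace_nonneg

theorem trace_transpose_vecMulVec_self_mul_self {ι R : Type*} [Fintype ι] [CommSemiring R]
    (v : ι → R) : ((vecMulVec v v)ᵀ * vecMulVec v v).trace = (v ⬝ᵥ v) ^ 2 := by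
  rw [transpose_vecMulVec, vecMulVec_mul_vecMulVec, trace_vecMulVec, dotProduct_smul, smul_eq_mul,
    sq]

end Matrix

theorem frobNorm_inv_dotProduct_smul_vecMulVec_self {n : ℕ} {v : Fin n → ℝ} (hv : v ≠ 0) :
    frobNorm ((v ⬝ᵥ v)⁻¹ • vecMulVec v v) = 1 := by
  have hvv : v ⬝ᵥ v ≠ 0 := fun h => hv (dotProduct_self_eq_zero.mp h)
  rw [frobNorm, transpose_smul, Matrix.smul_mul, Matrix.mul_smul, trace_smul, trace_smul,
    trace_transpose_vecMulVec_self_mul_self, smul_eq_mul, smul_eq_mul]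
  field_simp
  exact Real.sqrt_one

theorem stmt_19_general (n : ℕ) (A B : Matrix (Fin n) (Fin n) ℝ)
    (hA : A.PosSemidef) (hB : B.PosSemidef)
    (v : Fin n → ℝ) (hv : v ≠ 0) (hAv : A.mulVec v = 0) :
    frobNorm ((v ⬝ᵥ v)⁻¹ • vecMulVec v v) = 1 ∧
    (A * ((v ⬝ᵥ v)⁻¹ • vecMulVec v v) * B * ((v ⬝ᵥ v)⁻¹ • vecMulVec v v)).trace = 0 ∧
    (∀ W : Matrix (Fin n) (Fin n) ℝ, Wᵀ = -W → 0 ≤ (A * W * B * Wᵀ).trace) ∧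
    sInf (Eset A B) ≤ sInf (Oset A B) := by
  set U := (v ⬝ᵥ v)⁻¹ • vecMulVec v v
  have hU_norm : frobNorm U = 1 := frobNorm_inv_dotProduct_smul_vecMulVec_self hv
  have hU_symm : Uᵀ = U := by rw [transpose_smul, transpose_vecMulVec]
  have hAU : A * U = 0 := by rw [Matrix.mul_smul, mul_vecMulVec, hAv, zero_vecMulVec, smul_zero]
  have hE : (A * U * B * U).trace = 0 := by simp [hAU]
  have hO : ∀ W : Matrix (Fin n) (Fin n) ℝ, Wᵀ = -W → 0 ≤ (A * W * B * Wᵀ).trace := fun W _ => by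
    simpa only [conjTranspose_eq_transpose_of_trivial] using
      hA.trace_mul_mul_mul_conjTranspose_nonneg hB W
  refine ⟨hU_norm, hE, hO, ?_⟩
  calc sInf (Eset A B) ≤ 0 := Real.sInf_nonpos' ⟨0, ⟨U, hU_symm, hU_norm, hE.symm⟩, le_rfl⟩
    _ ≤ sInf (Oset A B) := Real.sInf_nonneg (by rintro _ ⟨W, hW, -, rfl⟩; exact hO W hW)

theorem stmt_19 (n : ℕ) (hn : 2 ≤ n) (A B : Matrix (Fin n) (Fin n) ℝ)
    (hA : A.PosSemidef) (hB : B.PosSemidef)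
    (v : Fin n → ℝ) (hv : v ≠ 0) (hAv : A.mulVec v = 0) :
    frobNorm ((v ⬝ᵥ v)⁻¹ • vecMulVec v v) = 1 ∧
    (A * ((v ⬝ᵥ v)⁻¹ • vecMulVec v v) * B * ((v ⬝ᵥ v)⁻¹ • vecMulVec v v)).trace = 0 ∧
    (∀ W : Matrix (Fin n) (Fin n) ℝ, Wᵀ = -W → 0 ≤ (A * W * B * Wᵀ).trace) ∧
    sInf (Eset A B) ≤ sInf (Oset A B) :=
  stmt_19_general n A B hA hB v hv hAv
end
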